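/- arXiv:1811.03454 — 3 statements merged into one kernel-verified Lean document; each statement's English description precedes it below -/
import Mathlib

section
/- Let V_k ∈ ℝ^{n×k} and V_k^⊥ ∈ ℝ^{n×(n−k)} together form an orthogonal matrix, Δ ∈ ℝ^{(n−k)×k}, and Ẑ_k = (V_k + V_k^⊥ Δ)(I + ΔᵀΔ)^{−1/2}. Then Ẑ_k has orthonormal columns, and for any k×k diagonal matrix Σ_k: Σ_k V_kᵀ(I − Ẑ_k Ẑ_kᵀ) = Σ_k (I + ΔᵀΔ)^{−1} Δᵀ Δ V_kᵀ − Σ_k (I + ΔᵀΔ)^{−1} Δᵀ (V_k^⊥)ᵀ. -/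
open Matrix

/-- Let (V_k, V_k^⊥) be an orthogonal n×n matrix, Δ an (n−k)×k matrix,
N the (positive definite) inverse square root of I + ΔᵀΔ, and
Ẑ_k = (V_k + V_k^⊥ Δ) N. Then Ẑ_k has orthonormal columns and, for any
k×k diagonal matrix Σ_k,
Σ_k V_kᵀ(I − Ẑ_k Ẑ_kᵀ) = Σ_k (I + ΔᵀΔ)⁻¹ Δᵀ Δ V_kᵀ − Σ_k (I + ΔᵀΔ)⁻¹ Δᵀ (V_k^⊥)ᵀ. -/
theorem Zk_orthonormal_and_residual_formula {n k p : ℕ}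
    (Vk : Matrix (Fin n) (Fin k) ℝ) (Vp : Matrix (Fin n) (Fin p) ℝ)
    (hVk : Vkᵀ * Vk = 1) (hVp : Vpᵀ * Vp = 1) (hVkp : Vkᵀ * Vp = 0)
    (hfull : Vk * Vkᵀ + Vp * Vpᵀ = 1)
    (Δ : Matrix (Fin p) (Fin k) ℝ)
    (N : Matrix (Fin k) (Fin k) ℝ) (hNpd : N.PosDef)
    (hN : N * N = (1 + Δᵀ * Δ)⁻¹)
    (d : Fin k → ℝ) :
    let Z : Matrix (Fin n) (Fin k) ℝ := (Vk + Vp * Δ) * N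
    Zᵀ * Z = 1 ∧
    Matrix.diagonal d * Vkᵀ * (1 - Z * Zᵀ) =
      Matrix.diagonal d * (1 + Δᵀ * Δ)⁻¹ * Δᵀ * Δ * Vkᵀ -
        Matrix.diagonal d * (1 + Δᵀ * Δ)⁻¹ * Δᵀ * Vpᵀ := by
  intro Z
  set M : Matrix (Fin k) (Fin k) ℝ := 1 + Δᵀ * Δ with hM
  -- N is symmetric
  have hNT : Nᵀ = N := by
    have := hNpd.isHermitian
    simpa [Matrix.IsHermitian, Matrix.conjTranspose_eq_transpose_of_trivial] using this
  -- M is positive definite, hence invertible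
  have hMpd : M.PosDef := by
    have h1 : (1 : Matrix (Fin k) (Fin k) ℝ).PosDef := Matrix.PosDef.one
    have h2 : (Δᵀ * Δ).PosSemidef := by
      simpa [Matrix.conjTranspose_eq_transpose_of_trivial] using
        Matrix.posSemidef_conjTranspose_mul_self Δ
    exact h1.add_posSemidef h2
  have hMdet : IsUnit M.det := isUnit_iff_ne_zero.2 hMpd.det_pos.ne'
  have hMMinv : M * M⁻¹ = 1 := Matrix.mul_nonsing_inv M hMdet
  have hMinvM : M⁻¹ * M = 1 := Matrix.nonsing_inv_mul M hMdet
  -- N commutes with M⁻¹ and M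
  have hNMinv : N * M⁻¹ = M⁻¹ * N := by
    rw [← hN]; rw [mul_assoc]
  have hMN : M * N = N * M := by
    calc M * N = M * N * (M⁻¹ * M) := by rw [hMinvM, mul_one]
    _ = M * (N * M⁻¹) * M := by simp only [Matrix.mul_assoc]
    _ = M * (M⁻¹ * N) * M := by rw [hNMinv]
    _ = (M * M⁻¹) * N * M := by simp only [Matrix.mul_assoc]
    _ = N * M := by rw [hMMinv, one_mul]
  -- key: N * M * N = 1
  have hNMN : N * M * N = 1 := by
    calc N * M * N = M * N * N := by rw [hMN]
    _ = M * (N * N) := by rw [mul_assoc]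
    _ = M * M⁻¹ := by rw [hN]
    _ = 1 := hMMinv
  have hVpk : Vpᵀ * Vk = 0 := by
    have := congrArg Matrix.transpose hVkp
    simpa using this
  -- (Vk + VpΔ)ᵀ (Vk + VpΔ) = M
  have hGram : (Vk + Vp * Δ)ᵀ * (Vk + Vp * Δ) = M := by
    simp only [Matrix.transpose_add, Matrix.transpose_mul]
    calc (Vkᵀ + Δᵀ * Vpᵀ) * (Vk + Vp * Δ)
        = Vkᵀ * Vk + Vkᵀ * Vp * Δ + Δᵀ * (Vpᵀ * Vk) + Δᵀ * (Vpᵀ * Vp) * Δ := by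
          simp only [Matrix.add_mul, Matrix.mul_add, Matrix.mul_assoc]; abel
    _ = M := by rw [hVk, hVkp, hVpk, hVp, hM]; simp
  constructor
  · show ((Vk + Vp * Δ) * N)ᵀ * ((Vk + Vp * Δ) * N) = 1
    rw [Matrix.transpose_mul, hNT]
    calc N * (Vk + Vp * Δ)ᵀ * ((Vk + Vp * Δ) * N)
        = N * ((Vk + Vp * Δ)ᵀ * (Vk + Vp * Δ)) * N := by simp only [Matrix.mul_assoc]
    _ = N * M * N := by rw [hGram]
    _ = 1 := hNMN
  · show Matrix.diagonal d * Vkᵀ * (1 - (Vk + Vp * Δ) * N * ((Vk + Vp * Δ) * N)ᵀ) =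
      Matrix.diagonal d * M⁻¹ * Δᵀ * Δ * Vkᵀ - Matrix.diagonal d * M⁻¹ * Δᵀ * Vpᵀ
    have hVkZ : Vkᵀ * ((Vk + Vp * Δ) * N * ((Vk + Vp * Δ) * N)ᵀ)
        = M⁻¹ * Vkᵀ + M⁻¹ * Δᵀ * Vpᵀ := by
      rw [Matrix.transpose_mul, hNT, Matrix.transpose_add, Matrix.transpose_mul]
      calc Vkᵀ * ((Vk + Vp * Δ) * N * (N * (Vkᵀ + Δᵀ * Vpᵀ)))
          = (Vkᵀ * Vk + (Vkᵀ * Vp) * Δ) * (N * N) * (Vkᵀ + Δᵀ * Vpᵀ) := by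
            simp only [Matrix.add_mul, Matrix.mul_add, Matrix.mul_assoc]
      _ = M⁻¹ * Vkᵀ + M⁻¹ * Δᵀ * Vpᵀ := by
          rw [hVk, hVkp, hN]
          simp only [Matrix.zero_mul, add_zero, Matrix.one_mul, Matrix.mul_add,
            Matrix.mul_assoc]
    have hone : (1 : Matrix (Fin k) (Fin k) ℝ) - M⁻¹ = M⁻¹ * (Δᵀ * Δ) := by
      calc (1 : Matrix (Fin k) (Fin k) ℝ) - M⁻¹ = M⁻¹ * M - M⁻¹ * 1 := by
            rw [hMinvM, mul_one]
      _ = M⁻¹ * (M - 1) := by rw [Matrix.mul_sub]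
      _ = M⁻¹ * (Δᵀ * Δ) := by rw [hM]; congr 1; abel
    calc Matrix.diagonal d * Vkᵀ * (1 - (Vk + Vp * Δ) * N * ((Vk + Vp * Δ) * N)ᵀ)
        = Matrix.diagonal d * (Vkᵀ - Vkᵀ * ((Vk + Vp * Δ) * N * ((Vk + Vp * Δ) * N)ᵀ)) := by
          simp only [Matrix.mul_sub, Matrix.mul_one, Matrix.mul_assoc]
    _ = Matrix.diagonal d * (Vkᵀ - (M⁻¹ * Vkᵀ + M⁻¹ * Δᵀ * Vpᵀ)) := by rw [hVkZ]
    _ = Matrix.diagonal d * ((1 - M⁻¹) * Vkᵀ - M⁻¹ * Δᵀ * Vpᵀ) := by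
          congr 1
          simp only [Matrix.sub_mul, Matrix.one_mul]
          abel
    _ = Matrix.diagonal d * (M⁻¹ * (Δᵀ * Δ) * Vkᵀ - M⁻¹ * Δᵀ * Vpᵀ) := by rw [hone]
    _ = Matrix.diagonal d * M⁻¹ * Δᵀ * Δ * Vkᵀ - Matrix.diagonal d * M⁻¹ * Δᵀ * Vpᵀ := by
          simp only [Matrix.mul_sub, Matrix.mul_assoc]
end

section
/- With the notation above, ‖Σ_k V_kᵀ(I − Ẑ_k Ẑ_kᵀ)‖² ≤ ‖Σ_k Δᵀ‖² · (‖Δ(I + ΔᵀΔ)^{−1}‖² + 1). In particular, if ‖Δ‖ < 1 this bound equals ‖Σ_k Δᵀ‖²·((‖Δ‖/(1+‖Δ‖²))² + 1), and in general it is at most (5/4)·‖Σ_k Δᵀ‖². -/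
open Matrix

/-- The spectral (operator 2-)norm of a real matrix. -/
noncomputable def specNorm {m n : ℕ} (A : Matrix (Fin m) (Fin n) ℝ) : ℝ :=
  ‖LinearMap.toContinuousLinearMap (Matrix.toEuclideanLin A)‖

/-!
With `A = 1 + ΔᵀΔ`, `B = 1 + ΔΔᵀ` and `G = ΔVₖᵀ - (Vₖ^⊥)ᵀ`, orthonormality turns the residual
into `Σₖ Vₖᵀ(1 - ẐₖẐₖᵀ) = Σₖ A⁻¹ΔᵀG = Σₖ Δᵀ (B⁻¹G)`, and `GGᵀ = B` gives
`(B⁻¹G)(B⁻¹G)ᵀ = B⁻¹`, a contraction. So the residual has norm at most `‖Σₖ Δᵀ‖`, which gives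
both inequalities. For the equality, `Δ = (ΔA⁻¹)A` gives `‖Δ‖ ≤ ‖ΔA⁻¹‖ (1 + ‖Δ‖²)`; conversely,
for `a = ‖Δ‖ ≤ 1`, `w = ΔᵀΔu` and `⟪u, w⟫ = ‖Δu‖²`,
`a²‖u + w‖² - (1 + a²)²⟪u, w⟫ = (1 - a⁴)(a²‖u‖² - ⟪u, w⟫) + a²‖a²u - w‖² ≥ 0`,
that is `(1 + a²)‖ΔA⁻¹(Au)‖ ≤ a‖Au‖`.
-/

open WithLp
open scoped Matrix.Norms.L2Operator RealInnerProductSpace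

section InnerProductSpace

variable {E : Type*} [NormedAddCommGroup E] [InnerProductSpace ℝ E]

theorem norm_le_norm_add_of_inner_nonneg {x y : E} (h : 0 ≤ ⟪x, y⟫) : ‖x‖ ≤ ‖x + y‖ := by
  refine (sq_le_sq₀ (norm_nonneg _) (norm_nonneg _)).mp ?_
  rw [norm_add_sq_real]
  nlinarith [sq_nonneg ‖y‖]

theorem one_add_sq_sq_mul_inner_le {u w : E} {a : ℝ} (ha : a ^ 2 ≤ 1)
    (huw : ⟪u, w⟫ ≤ a ^ 2 * ‖u‖ ^ 2) : (1 + a ^ 2) ^ 2 * ⟪u, w⟫ ≤ a ^ 2 * ‖u + w‖ ^ 2 := by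
  have key : a ^ 2 * ‖u + w‖ ^ 2 - (1 + a ^ 2) ^ 2 * ⟪u, w⟫ =
      (1 - a ^ 4) * (a ^ 2 * ‖u‖ ^ 2 - ⟪u, w⟫) + a ^ 2 * ‖a ^ 2 • u - w‖ ^ 2 := by
    rw [norm_add_sq_real, norm_sub_sq_real, norm_smul, real_inner_smul_left, Real.norm_eq_abs,
      abs_of_nonneg (sq_nonneg a)]
    ring
  have ha4 : 0 ≤ 1 - a ^ 4 := by nlinarith [sq_nonneg a]
  nlinarith [mul_nonneg ha4 (sub_nonneg.mpr huw),
    mul_nonneg (sq_nonneg a) (sq_nonneg ‖a ^ 2 • u - w‖)]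

end InnerProductSpace

namespace Matrix

section Algebra

variable {R : Type*} [CommRing R] {l m n : Type*}

theorem inv_one_add_mul_mul_comm [Fintype m] [Fintype n] [DecidableEq m] [DecidableEq n]
    (A : Matrix m n R) (B : Matrix n m R) :
    (1 + B * A)⁻¹ * B = B * (1 + A * B)⁻¹ := by
  by_cases h : IsUnit (1 + A * B).det
  · have h' : IsUnit (1 + B * A).det := by rwa [det_one_add_mul_comm]
    have hcomm : B * (1 + A * B) = (1 + B * A) * B := by
      rw [Matrix.mul_add, Matrix.add_mul, Matrix.mul_one, Matrix.one_mul, Matrix.mul_assoc]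
    calc (1 + B * A)⁻¹ * B = (1 + B * A)⁻¹ * (B * (1 + A * B)) * (1 + A * B)⁻¹ := by
          rw [Matrix.mul_assoc, Matrix.mul_assoc, mul_nonsing_inv _ h, Matrix.mul_one]
      _ = B * (1 + A * B)⁻¹ := by
          rw [hcomm, ← Matrix.mul_assoc, nonsing_inv_mul _ h', Matrix.one_mul]
  · have h' : ¬IsUnit (1 + B * A).det := by rwa [det_one_add_mul_comm]
    rw [nonsing_inv_apply_not_isUnit _ h, nonsing_inv_apply_not_isUnit _ h', Matrix.zero_mul,
      Matrix.mul_zero]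

variable [Fintype l] [Fintype m] {Vk : Matrix l m R} {Vp : Matrix l n R}

theorem transpose_mul_one_sub_mul_transpose_self [Fintype n] [DecidableEq l] [DecidableEq m]
    (hVk : Vkᵀ * Vk = 1) (hVkp : Vkᵀ * Vp = 0)
    (Δ : Matrix n m R) {N : Matrix m m R} (hN : N * Nᵀ = (1 + Δᵀ * Δ)⁻¹)
    (hA : IsUnit (1 + Δᵀ * Δ).det) :
    Vkᵀ * (1 - (Vk + Vp * Δ) * N * ((Vk + Vp * Δ) * N)ᵀ) =
      (1 + Δᵀ * Δ)⁻¹ * Δᵀ * (Δ * Vkᵀ - Vpᵀ) := by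
  have hVkZ : Vkᵀ * (Vk + Vp * Δ) = 1 := by
    rw [Matrix.mul_add, hVk, ← Matrix.mul_assoc, hVkp, Matrix.zero_mul, add_zero]
  calc Vkᵀ * (1 - (Vk + Vp * Δ) * N * ((Vk + Vp * Δ) * N)ᵀ)
      = Vkᵀ - Vkᵀ * (Vk + Vp * Δ) * (N * Nᵀ) * (Vk + Vp * Δ)ᵀ := by
        simp only [transpose_mul, Matrix.mul_sub, Matrix.mul_one, Matrix.mul_assoc]
    _ = (1 + Δᵀ * Δ)⁻¹ * ((1 + Δᵀ * Δ) * Vkᵀ) - (1 + Δᵀ * Δ)⁻¹ * (Vk + Vp * Δ)ᵀ := by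
        rw [hVkZ, hN, Matrix.one_mul, ← Matrix.mul_assoc, nonsing_inv_mul _ hA, Matrix.one_mul]
    _ = (1 + Δᵀ * Δ)⁻¹ * Δᵀ * (Δ * Vkᵀ - Vpᵀ) := by
        rw [← Matrix.mul_sub, Matrix.mul_assoc]
        congr 1
        simp only [transpose_add, transpose_mul, Matrix.add_mul, Matrix.one_mul, Matrix.mul_sub,
          Matrix.mul_assoc]
        abel

theorem mul_transpose_sub_transpose_mul_transpose_self [DecidableEq m] [DecidableEq n]
    (hVk : Vkᵀ * Vk = 1) (hVp : Vpᵀ * Vp = 1) (hVkp : Vkᵀ * Vp = 0) (Δ : Matrix n m R) :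
    (Δ * Vkᵀ - Vpᵀ) * (Δ * Vkᵀ - Vpᵀ)ᵀ = 1 + Δ * Δᵀ := by
  have hVpk : Vpᵀ * Vk = 0 := by simpa using congrArg transpose hVkp
  simp only [transpose_sub, transpose_mul, transpose_transpose, Matrix.sub_mul, Matrix.mul_sub,
    Matrix.mul_assoc]
  simp only [← Matrix.mul_assoc Vkᵀ, ← Matrix.mul_assoc Vpᵀ, hVk, hVp, hVkp, hVpk,
    Matrix.one_mul, Matrix.zero_mul, Matrix.mul_zero]
  abel

end Algebra

section L2OpNorm

variable {𝕜 : Type*} [RCLike 𝕜] {m n : Type*} [Fintype m] [Fintype n] [DecidableEq n]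

theorem l2_opNorm_le_of_mulVec {A : Matrix m n 𝕜} {c : ℝ} (hc : 0 ≤ c)
    (h : ∀ x : n → 𝕜,
      ‖(toLp 2 (A *ᵥ x) : EuclideanSpace 𝕜 m)‖ ≤ c * ‖(toLp 2 x : EuclideanSpace 𝕜 n)‖) :
    ‖A‖ ≤ c :=
  ContinuousLinearMap.opNorm_le_bound _ hc fun x => h (ofLp x)

theorem norm_toLp_mulVec_le (A : Matrix m n 𝕜) (x : n → 𝕜) :
    ‖(toLp 2 (A *ᵥ x) : EuclideanSpace 𝕜 m)‖ ≤ ‖A‖ * ‖(toLp 2 x : EuclideanSpace 𝕜 n)‖ :=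
  A.l2_opNorm_mulVec (toLp 2 x)

theorem l2_opNorm_one_le : ‖(1 : Matrix n n 𝕜)‖ ≤ 1 :=
  l2_opNorm_le_of_mulVec zero_le_one fun x => by rw [one_mulVec, one_mul]

end L2OpNorm

section Real

variable {l m n o : Type*} [Fintype l] [Fintype m] [Fintype n] [Fintype o]

theorem inner_toLp_transpose_mulVec (A : Matrix m n ℝ) (x : n → ℝ) (y : m → ℝ) :
    ⟪(toLp 2 x : EuclideanSpace ℝ n), toLp 2 (Aᵀ *ᵥ y)⟫ =
      ⟪(toLp 2 (A *ᵥ x) : EuclideanSpace ℝ m), toLp 2 y⟫ := by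
  simp only [EuclideanSpace.inner_toLp_toLp, star_trivial, dotProduct_comm _ x,
    dotProduct_mulVec, mulVec_transpose]

theorem posSemidef_transpose_mul_self (A : Matrix m n ℝ) : (Aᵀ * A).PosSemidef := by
  simpa using posSemidef_conjTranspose_mul_self A

theorem posSemidef_mul_transpose_self (A : Matrix m n ℝ) : (A * Aᵀ).PosSemidef := by
  simpa using posSemidef_self_mul_conjTranspose A

variable [DecidableEq n]

theorem l2_opNorm_transpose_mul_self (A : Matrix m n ℝ) : ‖Aᵀ * A‖ = ‖A‖ ^ 2 := by
  rw [← conjTranspose_eq_transpose_of_trivial, l2_opNorm_conjTranspose_mul_self, sq]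

theorem isUnit_det_one_add {P : Matrix n n ℝ} (hP : P.PosSemidef) : IsUnit (1 + P).det :=
  (isUnit_iff_isUnit_det _).mp (PosDef.one.add_posSemidef hP).isUnit

theorem l2_opNorm_inv_one_add_le_one {P : Matrix n n ℝ} (hP : P.PosSemidef) :
    ‖(1 + P)⁻¹‖ ≤ 1 := by
  refine l2_opNorm_le_of_mulVec zero_le_one fun x => ?_
  set y := (1 + P)⁻¹ *ᵥ x
  have hx : (1 + P) *ᵥ y = x := by
    rw [mulVec_mulVec, mul_nonsing_inv _ (isUnit_det_one_add hP), one_mulVec]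
  rw [one_mul, ← hx, add_mulVec, one_mulVec, toLp_add]
  refine norm_le_norm_add_of_inner_nonneg ?_
  simpa [EuclideanSpace.inner_toLp_toLp, dotProduct_comm] using hP.dotProduct_mulVec_nonneg y

theorem le_l2_opNorm_mul_inv_one_add_transpose_mul_self_mul (Δ : Matrix m n ℝ) :
    ‖Δ‖ ≤ ‖Δ * (1 + Δᵀ * Δ)⁻¹‖ * (1 + ‖Δ‖ ^ 2) := by
  have hΔ : Δ = Δ * (1 + Δᵀ * Δ)⁻¹ * (1 + Δᵀ * Δ) := by
    rw [Matrix.mul_assoc, nonsing_inv_mul _ (isUnit_det_one_add (posSemidef_transpose_mul_self Δ)),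
      Matrix.mul_one]
  have hA : ‖1 + Δᵀ * Δ‖ ≤ 1 + ‖Δ‖ ^ 2 :=
    (norm_add_le _ _).trans (add_le_add l2_opNorm_one_le (l2_opNorm_transpose_mul_self Δ).le)
  calc ‖Δ‖ = ‖Δ * (1 + Δᵀ * Δ)⁻¹ * (1 + Δᵀ * Δ)‖ := congrArg _ hΔ
    _ ≤ ‖Δ * (1 + Δᵀ * Δ)⁻¹‖ * ‖1 + Δᵀ * Δ‖ := l2_opNorm_mul _ _
    _ ≤ ‖Δ * (1 + Δᵀ * Δ)⁻¹‖ * (1 + ‖Δ‖ ^ 2) := by gcongr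

theorem l2_opNorm_mul_inv_one_add_transpose_mul_self_mul_le {Δ : Matrix m n ℝ} (h : ‖Δ‖ ≤ 1) :
    ‖Δ * (1 + Δᵀ * Δ)⁻¹‖ * (1 + ‖Δ‖ ^ 2) ≤ ‖Δ‖ := by
  set a := ‖Δ‖
  have ha : a ^ 2 ≤ 1 := pow_le_one₀ (norm_nonneg Δ) h
  rw [← le_div_iff₀ (by positivity)]
  refine l2_opNorm_le_of_mulVec (by positivity) fun x => ?_
  set u := (1 + Δᵀ * Δ)⁻¹ *ᵥ x
  have hx : (1 + Δᵀ * Δ) *ᵥ u = x := by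
    rw [mulVec_mulVec, mul_nonsing_inv _ (isUnit_det_one_add (posSemidef_transpose_mul_self Δ)),
      one_mulVec]
  have hMx : (Δ * (1 + Δᵀ * Δ)⁻¹) *ᵥ x = Δ *ᵥ u := (mulVec_mulVec _ _ _).symm
  rw [hMx, ← hx, add_mulVec, one_mulVec, toLp_add]
  have hinner : ⟪(toLp 2 u : EuclideanSpace ℝ n), toLp 2 ((Δᵀ * Δ) *ᵥ u)⟫ =
      ‖(toLp 2 (Δ *ᵥ u) : EuclideanSpace ℝ m)‖ ^ 2 := by
    rw [← mulVec_mulVec, inner_toLp_transpose_mulVec, real_inner_self_eq_norm_sq]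
  have hbound : ⟪(toLp 2 u : EuclideanSpace ℝ n), toLp 2 ((Δᵀ * Δ) *ᵥ u)⟫ ≤
      a ^ 2 * ‖(toLp 2 u : EuclideanSpace ℝ n)‖ ^ 2 := by
    rw [hinner, ← mul_pow]
    exact pow_le_pow_left₀ (norm_nonneg _) (norm_toLp_mulVec_le Δ u) 2
  have key := one_add_sq_sq_mul_inner_le ha hbound
  rw [hinner] at key
  rw [div_mul_eq_mul_div, le_div_iff₀ (by positivity)]
  refine (sq_le_sq₀ (by positivity) (by positivity)).mp ?_
  nlinarith [key]

theorem l2_opNorm_mul_inv_one_add_transpose_mul_self {Δ : Matrix m n ℝ} (h : ‖Δ‖ ≤ 1) :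
    ‖Δ * (1 + Δᵀ * Δ)⁻¹‖ = ‖Δ‖ / (1 + ‖Δ‖ ^ 2) := by
  rw [eq_div_iff (by positivity)]
  exact le_antisymm (l2_opNorm_mul_inv_one_add_transpose_mul_self_mul_le h)
    (le_l2_opNorm_mul_inv_one_add_transpose_mul_self_mul Δ)

variable [DecidableEq m]

theorem l2_opNorm_transpose (A : Matrix m n ℝ) : ‖Aᵀ‖ = ‖A‖ := by
  rw [← conjTranspose_eq_transpose_of_trivial, l2_opNorm_conjTranspose]

theorem l2_opNorm_mul_transpose_self (A : Matrix m n ℝ) : ‖A * Aᵀ‖ = ‖A‖ ^ 2 := by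
  simpa [l2_opNorm_transpose] using l2_opNorm_transpose_mul_self Aᵀ

theorem l2_opNorm_inv_one_add_mul_le_one {P : Matrix m m ℝ} (hP : P.PosSemidef)
    {G : Matrix m n ℝ} (hG : G * Gᵀ = 1 + P) : ‖(1 + P)⁻¹ * G‖ ≤ 1 := by
  have hsymm : (1 + P)ᵀ = 1 + P := by
    rw [transpose_add, transpose_one, ← conjTranspose_eq_transpose_of_trivial, hP.isHermitian.eq]
  have hgram : (1 + P)⁻¹ * G * ((1 + P)⁻¹ * G)ᵀ = (1 + P)⁻¹ := by
    rw [transpose_mul, transpose_nonsing_inv, hsymm, Matrix.mul_assoc, ← Matrix.mul_assoc G, hG,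
      mul_nonsing_inv _ (isUnit_det_one_add hP), Matrix.mul_one]
  have hsq : ‖(1 + P)⁻¹ * G‖ ^ 2 ≤ 1 := by
    rw [← l2_opNorm_mul_transpose_self, hgram]
    exact l2_opNorm_inv_one_add_le_one hP
  exact (sq_le_one_iff₀ (norm_nonneg _)).mp hsq

theorem l2_opNorm_residual_le [DecidableEq l] {Vk : Matrix l m ℝ} {Vp : Matrix l n ℝ}
    (hVk : Vkᵀ * Vk = 1) (hVp : Vpᵀ * Vp = 1) (hVkp : Vkᵀ * Vp = 0) {Δ : Matrix n m ℝ}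
    {N : Matrix m m ℝ} (hN : N * Nᵀ = (1 + Δᵀ * Δ)⁻¹) (D : Matrix o m ℝ) :
    ‖D * Vkᵀ * (1 - (Vk + Vp * Δ) * N * ((Vk + Vp * Δ) * N)ᵀ)‖ ≤ ‖D * Δᵀ‖ := by
  have hres : D * Vkᵀ * (1 - (Vk + Vp * Δ) * N * ((Vk + Vp * Δ) * N)ᵀ) =
      D * Δᵀ * ((1 + Δ * Δᵀ)⁻¹ * (Δ * Vkᵀ - Vpᵀ)) := by
    rw [Matrix.mul_assoc, transpose_mul_one_sub_mul_transpose_self hVk hVkp Δ hN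
      (isUnit_det_one_add (posSemidef_transpose_mul_self Δ)), inv_one_add_mul_mul_comm]
    simp only [Matrix.mul_assoc]
  rw [hres]
  calc _ ≤ ‖D * Δᵀ‖ * ‖(1 + Δ * Δᵀ)⁻¹ * (Δ * Vkᵀ - Vpᵀ)‖ := l2_opNorm_mul _ _
    _ ≤ ‖D * Δᵀ‖ := mul_le_of_le_one_right (norm_nonneg _)
        (l2_opNorm_inv_one_add_mul_le_one (posSemidef_mul_transpose_self Δ)
          (mul_transpose_sub_transpose_mul_transpose_self hVk hVp hVkp Δ))

end Real

end Matrix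

theorem specNorm_eq_l2_opNorm {m n : ℕ} (A : Matrix (Fin m) (Fin n) ℝ) : specNorm A = ‖A‖ := rfl

theorem residual_norm_sq_bound_general {n k p : ℕ}
    (Vk : Matrix (Fin n) (Fin k) ℝ) (Vp : Matrix (Fin n) (Fin p) ℝ)
    (hVk : Vkᵀ * Vk = 1) (hVp : Vpᵀ * Vp = 1) (hVkp : Vkᵀ * Vp = 0)
    (Δ : Matrix (Fin p) (Fin k) ℝ)
    (N : Matrix (Fin k) (Fin k) ℝ) (hNpd : N.PosDef)
    (hN : N * N = (1 + Δᵀ * Δ)⁻¹)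
    (d : Fin k → ℝ) :
    let Z : Matrix (Fin n) (Fin k) ℝ := (Vk + Vp * Δ) * N
    specNorm (Matrix.diagonal d * Vkᵀ * (1 - Z * Zᵀ)) ^ 2 ≤
        specNorm (Matrix.diagonal d * Δᵀ) ^ 2 *
          (specNorm (Δ * (1 + Δᵀ * Δ)⁻¹) ^ 2 + 1) ∧
    (specNorm Δ < 1 →
      specNorm (Matrix.diagonal d * Δᵀ) ^ 2 *
          (specNorm (Δ * (1 + Δᵀ * Δ)⁻¹) ^ 2 + 1) =
        specNorm (Matrix.diagonal d * Δᵀ) ^ 2 *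
          ((specNorm Δ / (1 + specNorm Δ ^ 2)) ^ 2 + 1)) ∧
    specNorm (Matrix.diagonal d * Vkᵀ * (1 - Z * Zᵀ)) ^ 2 ≤
        5 / 4 * specNorm (Matrix.diagonal d * Δᵀ) ^ 2 := by
  intro Z
  simp only [specNorm_eq_l2_opNorm]
  have hNN : N * Nᵀ = (1 + Δᵀ * Δ)⁻¹ := by
    rw [← conjTranspose_eq_transpose_of_trivial, hNpd.isHermitian.eq, hN]
  have hres : ‖diagonal d * Vkᵀ * (1 - Z * Zᵀ)‖ ^ 2 ≤ ‖diagonal d * Δᵀ‖ ^ 2 :=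
    pow_le_pow_left₀ (norm_nonneg _) (l2_opNorm_residual_le hVk hVp hVkp hNN _) 2
  refine ⟨hres.trans (le_mul_of_one_le_right (sq_nonneg _) (le_add_of_nonneg_left (sq_nonneg _))),
    fun hΔ => ?_, hres.trans (le_mul_of_one_le_left (sq_nonneg _) (by norm_num))⟩
  rw [l2_opNorm_mul_inv_one_add_transpose_mul_self hΔ.le]

/-- With Ẑ_k = (V_k + V_k^⊥Δ)(I + ΔᵀΔ)^{−1/2} and Σ_k = diag(d) with positive
entries: ‖Σ_k V_kᵀ(I − Ẑ_kẐ_kᵀ)‖² ≤ ‖Σ_kΔᵀ‖²·(‖Δ(I+ΔᵀΔ)⁻¹‖² + 1); if ‖Δ‖ < 1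
this bound equals ‖Σ_kΔᵀ‖²·((‖Δ‖/(1+‖Δ‖²))² + 1), and in general
‖Σ_k V_kᵀ(I − Ẑ_kẐ_kᵀ)‖² ≤ (5/4)·‖Σ_kΔᵀ‖². -/
theorem residual_norm_sq_bound {n k p : ℕ}
    (Vk : Matrix (Fin n) (Fin k) ℝ) (Vp : Matrix (Fin n) (Fin p) ℝ)
    (hVk : Vkᵀ * Vk = 1) (hVp : Vpᵀ * Vp = 1) (hVkp : Vkᵀ * Vp = 0)
    (hfull : Vk * Vkᵀ + Vp * Vpᵀ = 1)
    (Δ : Matrix (Fin p) (Fin k) ℝ)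
    (N : Matrix (Fin k) (Fin k) ℝ) (hNpd : N.PosDef)
    (hN : N * N = (1 + Δᵀ * Δ)⁻¹)
    (d : Fin k → ℝ) (hd : ∀ i, 0 < d i) :
    let Z : Matrix (Fin n) (Fin k) ℝ := (Vk + Vp * Δ) * N
    specNorm (Matrix.diagonal d * Vkᵀ * (1 - Z * Zᵀ)) ^ 2 ≤
        specNorm (Matrix.diagonal d * Δᵀ) ^ 2 *
          (specNorm (Δ * (1 + Δᵀ * Δ)⁻¹) ^ 2 + 1) ∧
    (specNorm Δ < 1 →
      specNorm (Matrix.diagonal d * Δᵀ) ^ 2 *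
          (specNorm (Δ * (1 + Δᵀ * Δ)⁻¹) ^ 2 + 1) =
        specNorm (Matrix.diagonal d * Δᵀ) ^ 2 *
          ((specNorm Δ / (1 + specNorm Δ ^ 2)) ^ 2 + 1)) ∧
    specNorm (Matrix.diagonal d * Vkᵀ * (1 - Z * Zᵀ)) ^ 2 ≤
        5 / 4 * specNorm (Matrix.diagonal d * Δᵀ) ^ 2 :=
  residual_norm_sq_bound_general Vk Vp hVk hVp hVkp Δ N hNpd hN d
end

section
/- Let σ_j = ζ j^{−α} for j = 1,…,n with ζ > 0, α > 0, and let c ≥ 1 satisfy 1 + c < ((k+1)/k)^α for a fixed k ≤ n−1. Then for every 1 ≤ i ≤ k: σ_i − c·σ_{k+1} > σ_{i+1}. -/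
/-- For power-decay singular values σ_j = ζ j^{−α} (ζ > 0, α > 0), if c ≥ 1
satisfies 1 + c < ((k+1)/k)^α for a fixed k ≤ n−1, then for every 1 ≤ i ≤ k
one has σ_i − c·σ_{k+1} > σ_{i+1}. -/
theorem sigma_sub_mul_gt_next (ζ α : ℝ) (hζ : 0 < ζ) (hα : 0 < α)
    (n k : ℕ) (hk1 : 1 ≤ k) (hk : k ≤ n - 1) (hn : 2 ≤ n)
    (σ : ℕ → ℝ) (hσ : ∀ j, σ j = ζ * (j : ℝ) ^ (-α))
    (c : ℝ) (hc : 1 ≤ c) (h : 1 + c < (((k : ℝ) + 1) / k) ^ α) :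
    ∀ i, 1 ≤ i → i ≤ k → σ (i + 1) < σ i - c * σ (k + 1) := by
  intro i h1 hik
  have hi : (0:ℝ) < i := by exact_mod_cast h1
  have hi1 : (0:ℝ) < (i:ℝ) + 1 := by linarith
  have hkp : (0:ℝ) < k := by exact_mod_cast hk1
  have hk1p : (0:ℝ) < (k:ℝ) + 1 := by linarith
  set A := (i:ℝ) ^ α with hAdef
  set B := ((i:ℝ) + 1) ^ α with hBdef
  set K := ((k:ℝ) + 1) ^ α with hKdef
  have hA : 0 < A := Real.rpow_pos_of_pos hi α
  have hB : 0 < B := Real.rpow_pos_of_pos hi1 α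
  have hK : 0 < K := Real.rpow_pos_of_pos hk1p α
  -- (k+1)/k ≤ (i+1)/i
  have hratio : ((k:ℝ) + 1) / k ≤ ((i:ℝ) + 1) / i := by
    rw [div_le_div_iff₀ hkp hi]
    have : (i:ℝ) ≤ k := by exact_mod_cast hik
    nlinarith
  have h2 : 1 + c < (((i:ℝ) + 1) / i) ^ α :=
    lt_of_lt_of_le h (Real.rpow_le_rpow (by positivity) hratio hα.le)
  have hdiv : (((i:ℝ) + 1) / i) ^ α = B / A := Real.div_rpow (by positivity) hi.le α
  have hcA : A + c * A < B := by
    rw [hdiv, lt_div_iff₀ hA] at h2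
    nlinarith
  have hBK : B ≤ K := by
    apply Real.rpow_le_rpow hi1.le _ hα.le
    have : (i:ℝ) ≤ k := by exact_mod_cast hik
    linarith
  -- key algebraic inequality
  have h3 : c * A * B < (B - A) * B := by nlinarith
  have hBA : 0 < B - A := by nlinarith
  have h4 : (B - A) * B ≤ (B - A) * K := mul_le_mul_of_nonneg_left hBK hBA.le
  have hkey : A * K + c * (A * B) < B * K := by nlinarith
  rw [hσ, hσ, hσ]
  push_cast
  rw [Real.rpow_neg hi1.le, Real.rpow_neg hi.le, Real.rpow_neg (by positivity : (0:ℝ) ≤ (k:ℝ)+1)]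
  rw [← hAdef, ← hBdef, ← hKdef]
  have e : ζ * A⁻¹ - c * (ζ * K⁻¹) - ζ * B⁻¹ = ζ * ((B * K - A * K - c * (A * B)) / (A * B * K)) := by
    field_simp
    ring
  have hpos : 0 < ζ * ((B * K - A * K - c * (A * B)) / (A * B * K)) := by
    apply mul_pos hζ
    apply div_pos (by linarith) (by positivity)
  linarith [e ▸ hpos]
end
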